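/- arXiv:2511.09508 — 3 statements merged into one kernel-verified Lean document; each statement's English description precedes it below -/
import Mathlib

section
/- Let x₀, y₀ > 0 and let f, g : [0,x₀] × [0,y₀] → ℝ be continuous and nonnegative. Suppose there are constants J ≥ 0, c₁ ≥ 0, c₂ ≥ 0 such that for all (x,y) ∈ [0,x₀] × [0,y₀] one has f(x,y) + g(x,y) ≤ J + c₁ ∫₀ˣ f(x',y) dx' + c₂ ∫₀ʸ g(x,y') dy'. Then for all (x,y) ∈ [0,x₀] × [0,y₀], f(x,y) + g(x,y) ≤ J · exp(2 c₁ x + 2 c₂ y). -/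
open MeasureTheory

private lemma integral_c_exp (c d a : ℝ) :
    ∫ t in (0:ℝ)..a, c * Real.exp (2*c*t + d)
      = (Real.exp (2*c*a + d) - Real.exp d) / 2 := by
  have hder : ∀ t : ℝ, HasDerivAt (fun t => Real.exp (2*c*t + d) / 2)
      (c * Real.exp (2*c*t + d)) t := by
    intro t
    have h1 : HasDerivAt (fun t : ℝ => 2*c*t + d) (2*c) t := by
      simpa using ((hasDerivAt_id t).const_mul (2*c)).add_const d
    have h2 := (Real.hasDerivAt_exp (2*c*t + d)).comp t h1
    have h3 : HasDerivAt (fun t => Real.exp (2*c*t + d) / 2)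
        (Real.exp (2*c*t + d) * (2*c) / 2) t := h2.div_const 2
    convert h3 using 1
    ring
  have hcont : Continuous fun t => c * Real.exp (2*c*t + d) := by continuity
  rw [intervalIntegral.integral_eq_sub_of_hasDerivAt (fun t _ => hder t)
    (hcont.intervalIntegrable 0 a)]
  have : 2*c*0 + d = d := by ring
  rw [this]
  ring

set_option maxHeartbeats 1000000
/-- Two-variable Grönwall-type lemma: if `f` and `g` are continuous and nonnegative on
`[0,x₀] × [0,y₀]` and satisfy
`f x y + g x y ≤ J + c₁ ∫₀ˣ f x' y dx' + c₂ ∫₀ʸ g x y' dy'`,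
then `f x y + g x y ≤ J * exp (2 c₁ x + 2 c₂ y)` on the rectangle. -/
theorem two_variable_gronwall
    (x₀ y₀ : ℝ) (hx₀ : 0 < x₀) (hy₀ : 0 < y₀)
    (f g : ℝ → ℝ → ℝ)
    (hf_cont : ContinuousOn (fun p : ℝ × ℝ => f p.1 p.2) (Set.Icc 0 x₀ ×ˢ Set.Icc 0 y₀))
    (hg_cont : ContinuousOn (fun p : ℝ × ℝ => g p.1 p.2) (Set.Icc 0 x₀ ×ˢ Set.Icc 0 y₀))
    (hf_nonneg : ∀ x ∈ Set.Icc 0 x₀, ∀ y ∈ Set.Icc 0 y₀, 0 ≤ f x y)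
    (hg_nonneg : ∀ x ∈ Set.Icc 0 x₀, ∀ y ∈ Set.Icc 0 y₀, 0 ≤ g x y)
    (J c₁ c₂ : ℝ) (hJ : 0 ≤ J) (hc₁ : 0 ≤ c₁) (hc₂ : 0 ≤ c₂)
    (hineq : ∀ x ∈ Set.Icc 0 x₀, ∀ y ∈ Set.Icc 0 y₀,
      f x y + g x y ≤
        J + c₁ * (∫ x' in (0:ℝ)..x, f x' y) + c₂ * (∫ y' in (0:ℝ)..y, g x y')) :
    ∀ x ∈ Set.Icc 0 x₀, ∀ y ∈ Set.Icc 0 y₀,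
      f x y + g x y ≤ J * Real.exp (2 * c₁ * x + 2 * c₂ * y) := by
  set R : Set (ℝ × ℝ) := Set.Icc 0 x₀ ×ˢ Set.Icc 0 y₀ with hR
  have hRcomp : IsCompact R := isCompact_Icc.prod isCompact_Icc
  -- continuity of the sum
  have hh_cont : ContinuousOn (fun p : ℝ × ℝ => f p.1 p.2 + g p.1 p.2) R :=
    hf_cont.add hg_cont
  -- key strict inequality with J + ε
  have key : ∀ ε : ℝ, 0 < ε → ∀ p ∈ R,
      f p.1 p.2 + g p.1 p.2 < (J + ε) * Real.exp (2*c₁*p.1 + 2*c₂*p.2) := by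
    intro ε hε
    by_contra hcon
    push_neg at hcon
    obtain ⟨p₀, hp₀R, hp₀⟩ := hcon
    set A : Set (ℝ × ℝ) :=
      R ∩ (fun p : ℝ × ℝ => f p.1 p.2 + g p.1 p.2 - (J + ε) * Real.exp (2*c₁*p.1 + 2*c₂*p.2))
        ⁻¹' Set.Ici 0 with hA
    have hAne : A.Nonempty := ⟨p₀, hp₀R, by simp [Set.mem_preimage]; linarith⟩
    have hAclosed : IsClosed A := by
      apply ContinuousOn.preimage_isClosed_of_isClosed
        (hh_cont.sub (ContinuousOn.mul continuousOn_const
          (Real.continuous_exp.comp (by continuity)).continuousOn))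
        (hRcomp.isClosed) isClosed_Ici
    have hAcomp : IsCompact A := hRcomp.of_isClosed_subset hAclosed Set.inter_subset_left
    obtain ⟨q, hqA, hqmin⟩ := hAcomp.exists_isMinOn hAne
      ((continuous_fst.add continuous_snd).continuousOn)
    obtain ⟨a, b⟩ := q
    obtain ⟨hqR, hqge⟩ := hqA
    obtain ⟨hq1, hq2⟩ := hqR
    have ha0 : 0 ≤ a := hq1.1
    have hax : a ≤ x₀ := hq1.2
    have hb0 : 0 ≤ b := hq2.1
    have hby : b ≤ y₀ := hq2.2
    have hqge' : (J + ε) * Real.exp (2*c₁*a + 2*c₂*b) ≤ f a b + g a b := by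
      have := hqge
      simp only [Set.mem_preimage, Set.mem_Ici] at this
      linarith
    -- strict inequality below the minimal point
    have hbelow1 : ∀ x' ∈ Set.Ico 0 a,
        f x' b + g x' b < (J + ε) * Real.exp (2*c₁*x' + 2*c₂*b) := by
      intro x' hx'
      by_contra hcontra
      push_neg at hcontra
      have hmem : (x', b) ∈ A := by
        refine ⟨⟨⟨hx'.1, le_trans hx'.2.le hax⟩, ⟨hb0, hby⟩⟩, ?_⟩
        simp only [Set.mem_preimage, Set.mem_Ici]
        linarith
      have h6 : a + b ≤ x' + b := hqmin hmem
      linarith [hx'.2]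
    have hbelow2 : ∀ y' ∈ Set.Ico 0 b,
        f a y' + g a y' < (J + ε) * Real.exp (2*c₁*a + 2*c₂*y') := by
      intro y' hy'
      by_contra hcontra
      push_neg at hcontra
      have hmem : (a, y') ∈ A := by
        refine ⟨⟨⟨ha0, hax⟩, ⟨hy'.1, le_trans hy'.2.le hby⟩⟩, ?_⟩
        simp only [Set.mem_preimage, Set.mem_Ici]
        linarith
      have h6 : a + b ≤ a + y' := hqmin hmem
      linarith [hy'.2]
    -- integrability
    have hf_int : IntervalIntegrable (fun x' => f x' b) volume 0 a := by
      have hco : ContinuousOn (fun x' => f x' b) (Set.Icc 0 a) := by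
        have : ContinuousOn (fun x' : ℝ => f x' b) (Set.Icc 0 x₀) :=
          hf_cont.comp ((continuous_id.prodMk continuous_const).continuousOn)
            (fun x hx => ⟨hx, hb0, hby⟩)
        exact this.mono (Set.Icc_subset_Icc le_rfl hax)
      rw [← Set.uIcc_of_le ha0] at hco
      exact hco.intervalIntegrable
    have hg_int : IntervalIntegrable (fun y' => g a y') volume 0 b := by
      have hco : ContinuousOn (fun y' => g a y') (Set.Icc 0 b) := by
        have : ContinuousOn (fun y' : ℝ => g a y') (Set.Icc 0 y₀) :=
          hg_cont.comp ((continuous_const.prodMk continuous_id).continuousOn)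
            (fun y hy => ⟨⟨ha0, hax⟩, hy⟩)
        exact this.mono (Set.Icc_subset_Icc le_rfl hby)
      rw [← Set.uIcc_of_le hb0] at hco
      exact hco.intervalIntegrable
    have hexp_int1 : IntervalIntegrable
        (fun x' => (J + ε) * (c₁ * Real.exp (2*c₁*x' + 2*c₂*b))) volume 0 a :=
      (Continuous.intervalIntegrable (by fun_prop) 0 a)
    have hexp_int2 : IntervalIntegrable
        (fun y' => (J + ε) * (c₂ * Real.exp (2*c₂*y' + 2*c₁*a))) volume 0 b :=
      (Continuous.intervalIntegrable (by fun_prop) 0 b)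
    -- a.e. inequalities
    have hae1 : (fun x' => c₁ * f x' b)
        ≤ᵐ[volume.restrict (Set.Icc 0 a)]
        fun x' => (J + ε) * (c₁ * Real.exp (2*c₁*x' + 2*c₂*b)) := by
      have hne : ∀ᵐ x' ∂(volume.restrict (Set.Icc 0 a)), x' ≠ a := by
        refine ae_restrict_of_ae ?_
        rw [ae_iff]
        simp only [ne_eq, not_not]
        have : {x : ℝ | x = a} = {a} := by ext x; simp
        rw [this]
        exact Real.volume_singleton
      have hmem : ∀ᵐ x' ∂(volume.restrict (Set.Icc 0 a)), x' ∈ Set.Icc 0 a :=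
        ae_restrict_mem measurableSet_Icc
      filter_upwards [hne, hmem] with x' hx'ne hx'mem
      have hx'Ico : x' ∈ Set.Ico 0 a := ⟨hx'mem.1, lt_of_le_of_ne hx'mem.2 hx'ne⟩
      have h1 := hbelow1 x' hx'Ico
      have hgnn : 0 ≤ g x' b :=
        hg_nonneg x' ⟨hx'Ico.1, le_trans hx'Ico.2.le hax⟩ b ⟨hb0, hby⟩
      have hfle : f x' b ≤ (J + ε) * Real.exp (2*c₁*x' + 2*c₂*b) := by linarith
      calc c₁ * f x' b ≤ c₁ * ((J + ε) * Real.exp (2*c₁*x' + 2*c₂*b)) :=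
            mul_le_mul_of_nonneg_left hfle hc₁
        _ = (J + ε) * (c₁ * Real.exp (2*c₁*x' + 2*c₂*b)) := by ring
    have hae2 : (fun y' => c₂ * g a y')
        ≤ᵐ[volume.restrict (Set.Icc 0 b)]
        fun y' => (J + ε) * (c₂ * Real.exp (2*c₂*y' + 2*c₁*a)) := by
      have hne : ∀ᵐ y' ∂(volume.restrict (Set.Icc 0 b)), y' ≠ b := by
        refine ae_restrict_of_ae ?_
        rw [ae_iff]
        simp only [ne_eq, not_not]
        have : {y : ℝ | y = b} = {b} := by ext y; simp
        rw [this]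
        exact Real.volume_singleton
      have hmem : ∀ᵐ y' ∂(volume.restrict (Set.Icc 0 b)), y' ∈ Set.Icc 0 b :=
        ae_restrict_mem measurableSet_Icc
      filter_upwards [hne, hmem] with y' hy'ne hy'mem
      have hy'Ico : y' ∈ Set.Ico 0 b := ⟨hy'mem.1, lt_of_le_of_ne hy'mem.2 hy'ne⟩
      have h1 := hbelow2 y' hy'Ico
      have hfnn : 0 ≤ f a y' :=
        hf_nonneg a ⟨ha0, hax⟩ y' ⟨hy'Ico.1, le_trans hy'Ico.2.le hby⟩
      have hgle : g a y' ≤ (J + ε) * Real.exp (2*c₁*a + 2*c₂*y') := by linarith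
      calc c₂ * g a y' ≤ c₂ * ((J + ε) * Real.exp (2*c₁*a + 2*c₂*y')) :=
            mul_le_mul_of_nonneg_left hgle hc₂
        _ = (J + ε) * (c₂ * Real.exp (2*c₂*y' + 2*c₁*a)) := by
            rw [show 2*c₁*a + 2*c₂*y' = 2*c₂*y' + 2*c₁*a by ring]; ring
    -- integral bounds
    have hI1 : c₁ * (∫ x' in (0:ℝ)..a, f x' b)
        ≤ (J + ε) * ((Real.exp (2*c₁*a + 2*c₂*b) - Real.exp (2*c₂*b)) / 2) := by
      have hmono := intervalIntegral.integral_mono_ae_restrict ha0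
        (hf_int.const_mul c₁) hexp_int1 hae1
      rw [intervalIntegral.integral_const_mul] at hmono
      calc c₁ * ∫ x' in (0:ℝ)..a, f x' b
          ≤ ∫ x' in (0:ℝ)..a, (J + ε) * (c₁ * Real.exp (2*c₁*x' + 2*c₂*b)) := hmono
        _ = (J + ε) * ∫ x' in (0:ℝ)..a, c₁ * Real.exp (2*c₁*x' + 2*c₂*b) := by
            rw [intervalIntegral.integral_const_mul]
        _ = (J + ε) * ((Real.exp (2*c₁*a + 2*c₂*b) - Real.exp (2*c₂*b)) / 2) := by
            rw [integral_c_exp]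
    have hI2 : c₂ * (∫ y' in (0:ℝ)..b, g a y')
        ≤ (J + ε) * ((Real.exp (2*c₁*a + 2*c₂*b) - Real.exp (2*c₁*a)) / 2) := by
      have hmono := intervalIntegral.integral_mono_ae_restrict hb0
        (hg_int.const_mul c₂) hexp_int2 hae2
      rw [intervalIntegral.integral_const_mul] at hmono
      calc c₂ * ∫ y' in (0:ℝ)..b, g a y'
          ≤ ∫ y' in (0:ℝ)..b, (J + ε) * (c₂ * Real.exp (2*c₂*y' + 2*c₁*a)) := hmono
        _ = (J + ε) * ∫ y' in (0:ℝ)..b, c₂ * Real.exp (2*c₂*y' + 2*c₁*a) := by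
            rw [intervalIntegral.integral_const_mul]
        _ = (J + ε) * ((Real.exp (2*c₂*b + 2*c₁*a) - Real.exp (2*c₁*a)) / 2) := by
            rw [integral_c_exp]
        _ = (J + ε) * ((Real.exp (2*c₁*a + 2*c₂*b) - Real.exp (2*c₁*a)) / 2) := by
            rw [show 2*c₂*b + 2*c₁*a = 2*c₁*a + 2*c₂*b by ring]
    -- conclude contradiction
    have hmain := hineq a ⟨ha0, hax⟩ b ⟨hb0, hby⟩
    set E12 := Real.exp (2*c₁*a + 2*c₂*b) with hE12
    set E1 := Real.exp (2*c₁*a) with hE1d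
    set E2 := Real.exp (2*c₂*b) with hE2d
    have hE1 : (1:ℝ) ≤ E1 := Real.one_le_exp (by positivity)
    have hE2 : (1:ℝ) ≤ E2 := Real.one_le_exp (by positivity)
    nlinarith [hqge', hmain, hI1, hI2,
      mul_nonneg (by linarith : (0:ℝ) ≤ J + ε) (by linarith : (0:ℝ) ≤ E1 + E2 - 2)]
  -- pass to the limit ε → 0
  intro x hx y hy
  by_contra hlt
  push_neg at hlt
  set E := Real.exp (2*c₁*x + 2*c₂*y) with hE
  have hEpos : 0 < E := Real.exp_pos _
  have hεpos : 0 < (f x y + g x y - J * E) / E := by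
    apply div_pos _ hEpos
    linarith
  have := key _ hεpos (x, y) ⟨hx, hy⟩
  simp only at this
  have : f x y + g x y < (J + (f x y + g x y - J * E) / E) * E := this
  rw [add_mul, div_mul_cancel₀ _ (ne_of_gt hEpos)] at this
  linarith
end

section
/- Let a ≥ 1, B ≥ 1 and u∞ < −a. Let φ, h, w : [u∞, −a] → ℝ be continuous, with φ differentiable, satisfying the Riccati transport equation φ'(u) = −½ φ(u)² − h(u) − 2 w(u) φ(u) for all u ∈ [u∞, −a]. Assume that for all u ∈ [u∞, −a]: h(u) ≥ 0, |φ(u) + 2/(−u)| ≤ B/u², and |w(u)| ≤ B a/(−u)³. Then | a·φ(−a) − (−u∞)·φ(u∞) + ∫_{u∞}^{−a} (−u) h(u) du | ≤ 10 (B + B²)/a. In particular, if ∫_{u∞}^{−a} (−u) h(u) du > (−u∞)·φ(u∞) + 10 (B + B²)/a, then φ(−a) < 0. -/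
set_option maxHeartbeats 1600000 in
/-- Integration of the incoming Raychaudhuri equation along the `u`-direction:
for `φ' = -½φ² - h - 2wφ` on `[u∞, -a]` with the scaling-hierarchy bounds
`h ≥ 0`, `|φ(u) + 2/(-u)| ≤ B/u²`, `|w(u)| ≤ Ba/(-u)³`, the focusing formula
`|a φ(-a) - (-u∞) φ(u∞) + ∫ (-u) h(u) du| ≤ 10(B + B²)/a` holds; in particular a
large integrated shear forces `φ(-a) < 0`. -/
theorem incoming_raychaudhuri_focusing
    (a B u_inf : ℝ) (ha : 1 ≤ a) (hB : 1 ≤ B) (hu_inf : u_inf < -a)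
    (φ h w : ℝ → ℝ)
    (hh_cont : ContinuousOn h (Set.Icc u_inf (-a)))
    (hw_cont : ContinuousOn w (Set.Icc u_inf (-a)))
    (hφ_cont : ContinuousOn φ (Set.Icc u_inf (-a)))
    (hode : ∀ u ∈ Set.Icc u_inf (-a),
      HasDerivAt φ (-(1/2) * (φ u) ^ 2 - h u - 2 * w u * φ u) u)
    (hh_nonneg : ∀ u ∈ Set.Icc u_inf (-a), 0 ≤ h u)
    (hφ_bound : ∀ u ∈ Set.Icc u_inf (-a), |φ u + 2 / (-u)| ≤ B / u ^ 2)
    (hw_bound : ∀ u ∈ Set.Icc u_inf (-a), |w u| ≤ B * a / (-u) ^ 3) :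
    |a * φ (-a) - (-u_inf) * φ u_inf + ∫ u in u_inf..(-a), (-u) * h u| ≤
        10 * (B + B ^ 2) / a ∧
    ((∫ u in u_inf..(-a), (-u) * h u) > (-u_inf) * φ u_inf + 10 * (B + B ^ 2) / a →
      φ (-a) < 0) := by
  have hle : u_inf ≤ -a := hu_inf.le
  have ha0 : (0:ℝ) < a := lt_of_lt_of_le one_pos ha
  have hB0 : (0:ℝ) < B := lt_of_lt_of_le one_pos hB
  have huIcc : Set.uIcc u_inf (-a) = Set.Icc u_inf (-a) := Set.uIcc_of_le hle
  have hne : ∀ u ∈ Set.Icc u_inf (-a), u ≠ 0 := fun u hu =>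
    ne_of_lt (lt_of_le_of_lt hu.2 (by linarith))
  set K : ℝ := 5*B + 5/2*B^2 with hKdef
  set E : ℝ → ℝ := fun u => -(φ u) + (-u) * (-(1/2)*(φ u)^2 - 2 * w u * φ u) with hE
  clear_value K E
  have hK0 : 0 < K := by rw [hKdef]; positivity
  -- pointwise bound
  have hEbound : ∀ u ∈ Set.Icc u_inf (-a), |E u| ≤ K / u^2 := by
    intro u hu
    have hu2 : u ≤ -a := hu.2
    have hs1 : (1:ℝ) ≤ -u := by linarith
    have hsa : a ≤ -u := by linarith
    have hs0 : (0:ℝ) < -u := by linarith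
    have hsq : u^2 = (-u)^2 := by ring
    have hεb : |φ u + 2/(-u)| ≤ B / (-u)^2 := by
      have := hφ_bound u hu; rwa [hsq] at this
    have hwb : |w u| ≤ B * a / (-u)^3 := hw_bound u hu
    have hφabs : |φ u| ≤ (2 + B) / (-u) := by
      have h1 : |φ u| ≤ |φ u + 2/(-u)| + |2/(-u)| := by
        have h0 := abs_add_le (φ u + 2/(-u)) (-(2/(-u)))
        rw [abs_neg] at h0
        simpa using h0
      have h2 : |2/(-u)| = 2/(-u) := abs_of_nonneg (by positivity)
      have h3 : B / (-u)^2 ≤ B / (-u) := by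
        apply div_le_div_of_nonneg_left hB0.le hs0
        nlinarith
      have h4 : B / (-u) + 2/(-u) = (2+B)/(-u) := by ring
      linarith [hεb]
    set s : ℝ := -u with hsdef
    set e : ℝ := φ u + 2/s with hedef
    have hid : E u = e - (1/2)*s*e^2 - 2*s*(w u)*(φ u) := by
      have hu_eq : u = -s := by rw [hsdef]; ring
      simp only [hE, hedef, hu_eq]
      field_simp
      ring
    rw [hsq]
    generalize hFu : φ u = F at *
    generalize hWu : w u = W at *
    generalize hEu : E u = EE at *
    clear_value s e
    clear hsdef hedef hFu hWu hEu hu hsq hu2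
    -- now a pure real-arithmetic problem
    have hs2pos : (0:ℝ) < s^2 := by positivity
    have htri : |EE| ≤ |e| + (1/2)*s*e^2 + 2*s*(|W| * |F|) := by
      rw [hid]
      have h0 := abs_add_three e (-((1/2)*s*e^2)) (-(2*s*W*F))
      have h1 : e + -((1/2)*s*e^2) + -(2*s*W*F)
          = e - (1/2)*s*e^2 - 2*s*W*F := by ring
      rw [h1] at h0
      have h2 : |(-((1/2)*s*e^2))| = (1/2)*s*e^2 := by
        rw [abs_neg]; exact abs_of_nonneg (by positivity)
      have h3 : |(-(2*s*W*F))| = 2*s*(|W| * |F|) := by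
        rw [abs_neg, abs_mul, abs_mul, abs_of_nonneg (by positivity : (0:ℝ) ≤ 2*s)]
        ring
      rw [h2, h3] at h0
      exact h0
    have t1' : |e| * s^2 ≤ B := by
      rw [← le_div_iff₀ hs2pos]; exact hεb
    have he2 : e^2 * s^4 ≤ B^2 := by
      have h0 : (|e| * s^2) * (|e| * s^2) ≤ B * B :=
        mul_le_mul t1' t1' (by positivity) hB0.le
      have h1 : (|e| * s^2) * (|e| * s^2) = e^2 * s^4 := by
        rw [show (|e| * s^2) * (|e| * s^2) = (|e| * |e|) * (s^2 * s^2) from by ring,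
          abs_mul_abs_self]
        ring
      nlinarith [h0, h1]
    have t2 : (1/2)*s*e^2 ≤ (B^2/2) / s^2 := by
      rw [le_div_iff₀ hs2pos]
      nlinarith [mul_nonneg (sub_nonneg.mpr hs1) (by positivity : (0:ℝ) ≤ s^3*e^2)]
    have hw' : |W| * s^3 ≤ B * a := by
      rw [← le_div_iff₀ (by positivity : (0:ℝ) < s^3)]; exact hwb
    have hφ' : |F| * s ≤ 2 + B := by
      rw [← le_div_iff₀ hs0]; exact hφabs
    have hprod : |W| * |F| * s^4 ≤ B * a * (2 + B) := by
      nlinarith [mul_le_mul hw' hφ' (by positivity) (by positivity : (0:ℝ) ≤ B * a)]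
    have t3 : 2*s*(|W| * |F|) ≤ (2*B*(2+B)) / s^2 := by
      rw [le_div_iff₀ hs2pos]
      have h5 : (0:ℝ) ≤ (s - a) * (B * (2+B)) :=
        mul_nonneg (by linarith) (by positivity)
      have h4 : |W| * |F| * s^4 ≤ B * (2+B) * s := by nlinarith [hprod]
      have h6 : (2*s*(|W| * |F|) * s^2) * s ≤ (2*B*(2+B)) * s := by nlinarith [h4]
      exact (mul_le_mul_iff_of_pos_right hs0).mp h6
    have hsum : B / s^2 + (B^2/2)/s^2 + (2*B*(2+B))/s^2 = K / s^2 := by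
      rw [hKdef]; field_simp; ring
    linarith
  -- continuity facts
  have hId : ContinuousOn (fun u : ℝ => -u) (Set.Icc u_inf (-a)) := continuousOn_id.neg
  have hcont1 : ContinuousOn (fun u => -(1/2)*(φ u)^2 - 2 * w u * φ u) (Set.Icc u_inf (-a)) :=
    (continuousOn_const.mul (hφ_cont.pow 2)).sub ((continuousOn_const.mul hw_cont).mul hφ_cont)
  have hEcont : ContinuousOn E (Set.Icc u_inf (-a)) := by
    rw [hE]; exact hφ_cont.neg.add (hId.mul hcont1)
  have hg_cont : ContinuousOn
      (fun u => -(φ u) + (-u) * (-(1/2)*(φ u)^2 - h u - 2 * w u * φ u))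
      (Set.Icc u_inf (-a)) :=
    hφ_cont.neg.add (hId.mul (((continuousOn_const.mul (hφ_cont.pow 2)).sub hh_cont).sub
      ((continuousOn_const.mul hw_cont).mul hφ_cont)))
  have hhi_cont : ContinuousOn (fun u => (-u) * h u) (Set.Icc u_inf (-a)) := hId.mul hh_cont
  have hg_int : IntervalIntegrable
      (fun u => -(φ u) + (-u) * (-(1/2)*(φ u)^2 - h u - 2 * w u * φ u))
      MeasureTheory.volume u_inf (-a) := by
    apply ContinuousOn.intervalIntegrable; rwa [huIcc]
  have hhi_int : IntervalIntegrable (fun u => (-u) * h u) MeasureTheory.volume u_inf (-a) := by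
    apply ContinuousOn.intervalIntegrable; rwa [huIcc]
  have hE_int : IntervalIntegrable E MeasureTheory.volume u_inf (-a) := by
    apply ContinuousOn.intervalIntegrable; rwa [huIcc]
  -- FTC for F = -u φ(u)
  have hFTC : (∫ u in u_inf..(-a),
      (-(φ u) + (-u) * (-(1/2)*(φ u)^2 - h u - 2 * w u * φ u)))
      = (-(-a)) * φ (-a) - (-u_inf) * φ u_inf := by
    apply intervalIntegral.integral_eq_sub_of_hasDerivAt (f := fun u => -u * φ u)
    · intro u hu
      rw [huIcc] at hu
      have h1 : HasDerivAt (fun x : ℝ => -x) (-1) u := (hasDerivAt_id u).neg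
      have h2 := h1.mul (hode u hu)
      refine h2.congr_deriv ?_
      ring
    · exact hg_int
  -- combine integrals
  have hEeq : (∫ u in u_inf..(-a), E u)
      = (∫ u in u_inf..(-a),
          (-(φ u) + (-u) * (-(1/2)*(φ u)^2 - h u - 2 * w u * φ u)))
        + ∫ u in u_inf..(-a), (-u) * h u := by
    rw [← intervalIntegral.integral_add hg_int hhi_int]
    apply intervalIntegral.integral_congr
    intro u hu
    simp only [hE]
    ring
  have hX : a * φ (-a) - (-u_inf) * φ u_inf + (∫ u in u_inf..(-a), (-u) * h u)
      = ∫ u in u_inf..(-a), E u := by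
    rw [hEeq, hFTC]; ring
  -- integral of the bound
  have hb_int : IntervalIntegrable (fun u => K / u^2) MeasureTheory.volume u_inf (-a) := by
    apply ContinuousOn.intervalIntegrable
    rw [huIcc]
    exact continuousOn_const.div (continuousOn_pow 2) (fun u hu => pow_ne_zero 2 (hne u hu))
  have hbFTC : (∫ u in u_inf..(-a), K / u^2)
      = (-K * (-a)⁻¹) - (-K * u_inf⁻¹) := by
    apply intervalIntegral.integral_eq_sub_of_hasDerivAt (f := fun u => -K * u⁻¹)
    · intro u hu
      rw [huIcc] at hu
      have h1 := (hasDerivAt_inv (hne u hu)).const_mul (-K)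
      refine h1.congr_deriv ?_
      ring
    · exact hb_int
  have hbval : (∫ u in u_inf..(-a), K / u^2) = K / a + K / u_inf := by
    rw [hbFTC]
    have : (-a)⁻¹ = -(a⁻¹) := by rw [inv_neg]
    rw [this]
    field_simp
    ring
  have hbnonneg : 0 ≤ K / a + K / u_inf := by
    have h1 : K / u_inf ≤ 0 := div_nonpos_of_nonneg_of_nonpos hK0.le (by linarith)
    have h2 : -(K / u_inf) ≤ K / a := by
      rw [← div_neg]
      exact div_le_div_of_nonneg_left hK0.le ha0 (by linarith)
    linarith
  have hmain : |a * φ (-a) - (-u_inf) * φ u_inf + ∫ u in u_inf..(-a), (-u) * h u|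
      ≤ 10 * (B + B ^ 2) / a := by
    rw [hX]
    have h1 : ‖∫ u in u_inf..(-a), E u‖ ≤ |∫ u in u_inf..(-a), K / u^2| := by
      apply intervalIntegral.norm_integral_le_abs_of_norm_le _ hb_int
      apply MeasureTheory.ae_restrict_of_forall_mem measurableSet_uIoc
      intro t ht
      rw [Set.uIoc_of_le hle] at ht
      exact hEbound t ⟨ht.1.le, ht.2⟩
    have h2 : |∫ u in u_inf..(-a), K / u^2| = K / a + K / u_inf := by
      rw [hbval]; exact abs_of_nonneg hbnonneg
    have h3 : K / u_inf ≤ 0 := div_nonpos_of_nonneg_of_nonpos hK0.le (by linarith)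
    have h4 : K / a ≤ 10 * (B + B ^ 2) / a := by
      exact (div_le_div_iff_of_pos_right ha0).mpr (by rw [hKdef]; nlinarith)
    have h5 : |∫ u in u_inf..(-a), E u| = ‖∫ u in u_inf..(-a), E u‖ := rfl
    rw [h5]
    linarith
  refine ⟨hmain, fun hint => ?_⟩
  have h1 := (abs_le.mp hmain).2
  have h2 : a * φ (-a) < 0 := by linarith
  nlinarith [h2, ha0]
end

section
/- Let a ≥ 1, B ≥ 1, let u ≤ −a be a real parameter, and let 0 < ε ≤ (−u)/(7 B a). Let ψ, k, ω : [0, ε] → ℝ be continuous with ψ differentiable, satisfying ψ'(s) = −½ ψ(s)² − k(s) − 2 ω(s) ψ(s) for all s ∈ [0, ε]. Assume |ψ(0)| ≤ B/(−u), 0 ≤ k(s) ≤ B a/u², and |ω(s)| ≤ B/(−u) for all s ∈ [0, ε]. Then |ψ(s) − ψ(0)| ≤ 7 B² a ε/u² for all s ∈ [0, ε]; in particular, if ψ(0) > 7 B² a ε/u², then ψ(s) > 0 for all s ∈ [0, ε]. -/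
set_option maxHeartbeats 1000000 in
/-- Integration of the outgoing Raychaudhuri equation over the short interval `[0, ε]`:
for `ψ' = -½ψ² - k - 2ωψ` with `|ψ(0)| ≤ B/(-u)`, `0 ≤ k ≤ Ba/u²`, `|ω| ≤ B/(-u)` and
`ε ≤ (-u)/(7Ba)`, one has `|ψ(s) - ψ(0)| ≤ 7B²aε/u²` on `[0, ε]`; in particular
`ψ(0) > 7B²aε/u²` forces `ψ > 0` throughout `[0, ε]`. -/
theorem outgoing_raychaudhuri_short_time
    (a B u ε : ℝ) (ha : 1 ≤ a) (hB : 1 ≤ B) (hu : u ≤ -a)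
    (hε_pos : 0 < ε) (hε : ε ≤ (-u) / (7 * B * a))
    (ψ k ω : ℝ → ℝ)
    (hk_cont : ContinuousOn k (Set.Icc 0 ε))
    (hω_cont : ContinuousOn ω (Set.Icc 0 ε))
    (hψ_cont : ContinuousOn ψ (Set.Icc 0 ε))
    (hode : ∀ s ∈ Set.Icc 0 ε,
      HasDerivAt ψ (-(1/2) * (ψ s) ^ 2 - k s - 2 * ω s * ψ s) s)
    (hψ0 : |ψ 0| ≤ B / (-u))
    (hk_bound : ∀ s ∈ Set.Icc 0 ε, 0 ≤ k s ∧ k s ≤ B * a / u ^ 2)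
    (hω_bound : ∀ s ∈ Set.Icc 0 ε, |ω s| ≤ B / (-u)) :
    (∀ s ∈ Set.Icc 0 ε, |ψ s - ψ 0| ≤ 7 * B ^ 2 * a * ε / u ^ 2) ∧
    (ψ 0 > 7 * B ^ 2 * a * ε / u ^ 2 → ∀ s ∈ Set.Icc 0 ε, 0 < ψ s) := by
  have hB0 : (0:ℝ) < B := by linarith
  have ha0 : (0:ℝ) < a := by linarith
  have hu0 : u < 0 := by linarith
  have hv : (0:ℝ) < -u := by linarith
  have hv_ne : (-u) ≠ 0 := ne_of_gt hv
  have hu_ne : u ≠ 0 := ne_of_lt hu0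
  have hu2 : (0:ℝ) < u ^ 2 := by positivity
  set M : ℝ := 2 * B / (-u) with hM_def
  set D : ℝ := 7 * B ^ 2 * a / u ^ 2 with hD_def
  have hM0 : 0 < M := div_pos (by linarith) hv
  have hD0 : 0 < D := div_pos (by positivity) hu2
  have hBM : B / (-u) ≤ M := by rw [hM_def]; gcongr; linarith
  -- D * ε ≤ B / (-u)
  have hDε : D * ε ≤ B / (-u) := by
    have h1 : D * ε ≤ D * ((-u) / (7 * B * a)) :=
      mul_le_mul_of_nonneg_left hε hD0.le
    have h2 : D * ((-u) / (7 * B * a)) = B / (-u) := by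
      rw [hD_def]; field_simp
    linarith [h2 ▸ h1]
  -- the pointwise derivative bound, assuming |ψ t| ≤ M
  have hderiv_bound : ∀ t ∈ Set.Icc 0 ε, |ψ t| ≤ M →
      |(-(1/2) * (ψ t) ^ 2 - k t - 2 * ω t * ψ t)| ≤ D := by
    intro t ht hψt
    obtain ⟨hk0, hk1⟩ := hk_bound t ht
    have hωt := hω_bound t ht
    set X := ψ t * (-u) with hX_def
    set W := ω t * (-u) with hW_def
    set K := k t * u ^ 2 with hK_def
    have hXb : |X| ≤ 2 * B := by
      rw [hX_def, abs_mul, abs_of_pos hv]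
      calc |ψ t| * (-u) ≤ (2 * B / (-u)) * (-u) :=
            mul_le_mul_of_nonneg_right hψt hv.le
        _ = 2 * B := div_mul_cancel₀ _ hv_ne
    have hWb : |W| ≤ B := by
      rw [hW_def, abs_mul, abs_of_pos hv]
      calc |ω t| * (-u) ≤ (B / (-u)) * (-u) :=
            mul_le_mul_of_nonneg_right hωt hv.le
        _ = B := div_mul_cancel₀ _ hv_ne
    have hK0 : 0 ≤ K := by positivity
    have hKb : K ≤ B * a := by
      rw [hK_def]
      calc k t * u ^ 2 ≤ (B * a / u ^ 2) * u ^ 2 :=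
            mul_le_mul_of_nonneg_right hk1 hu2.le
        _ = B * a := div_mul_cancel₀ _ (ne_of_gt hu2)
    obtain ⟨hX1, hX2⟩ := abs_le.mp hXb
    obtain ⟨hW1, hW2⟩ := abs_le.mp hWb
    have hexpr : (-(1/2) * (ψ t) ^ 2 - k t - 2 * ω t * ψ t) * u ^ 2
        = -(1/2) * X ^ 2 - K - 2 * W * X := by
      rw [hX_def, hW_def, hK_def]; ring
    have hmain : |(-(1/2) * (ψ t) ^ 2 - k t - 2 * ω t * ψ t) * u ^ 2|
        ≤ 7 * B ^ 2 * a := by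
      rw [hexpr, abs_le]
      have h1 : 0 ≤ (B - W) * (2 * B - X) :=
        mul_nonneg (by linarith) (by linarith)
      have h2 : 0 ≤ (B - W) * (2 * B + X) :=
        mul_nonneg (by linarith) (by linarith)
      have h3 : 0 ≤ (B + W) * (2 * B - X) :=
        mul_nonneg (by linarith) (by linarith)
      have h4 : 0 ≤ (B + W) * (2 * B + X) :=
        mul_nonneg (by linarith) (by linarith)
      have h5 : 0 ≤ (2 * B - X) * (2 * B + X) :=
        mul_nonneg (by linarith) (by linarith)
      have hWX1 : W * X ≤ 2 * B ^ 2 := by nlinarith [h2, h3]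
      have hWX2 : -(2 * B ^ 2) ≤ W * X := by nlinarith [h1, h4]
      have hX2b : X ^ 2 ≤ 4 * B ^ 2 := by nlinarith [h5]
      have hXsq : 0 ≤ X ^ 2 := sq_nonneg X
      have hr : 6 * B ^ 2 + B * a ≤ 7 * B ^ 2 * a := by nlinarith [mul_nonneg (mul_nonneg hB0.le hB0.le) (sub_nonneg.mpr ha), mul_nonneg (mul_nonneg hB0.le ha0.le) (sub_nonneg.mpr hB)]
      have hq : 4 * B ^ 2 ≤ 7 * B ^ 2 * a := by nlinarith [mul_nonneg (mul_nonneg hB0.le hB0.le) (sub_nonneg.mpr ha)]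
      constructor
      · linarith
      · linarith
    rw [hD_def, le_div_iff₀ hu2]
    calc |(-(1/2) * (ψ t) ^ 2 - k t - 2 * ω t * ψ t)| * u ^ 2
        = |(-(1/2) * (ψ t) ^ 2 - k t - 2 * ω t * ψ t) * u ^ 2| := by
          rw [abs_mul, abs_of_nonneg hu2.le]
      _ ≤ 7 * B ^ 2 * a := hmain
  -- MVT-type estimate on subintervals where |ψ| ≤ M
  have key : ∀ s' ∈ Set.Icc (0:ℝ) ε, (∀ t ∈ Set.Icc (0:ℝ) s', |ψ t| ≤ M) →
      ∀ t ∈ Set.Icc (0:ℝ) s', |ψ t - ψ 0| ≤ D * t := by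
    intro s' hs' hbound t ht
    have hsub : Set.Icc (0:ℝ) s' ⊆ Set.Icc 0 ε :=
      Set.Icc_subset_Icc le_rfl hs'.2
    have h0mem : (0:ℝ) ∈ Set.Icc (0:ℝ) s' := ⟨le_rfl, ht.1.trans ht.2⟩
    have := (convex_Icc (0:ℝ) s').norm_image_sub_le_of_norm_hasDerivWithin_le
      (f' := fun x => -(1/2) * (ψ x) ^ 2 - k x - 2 * ω x * ψ x)
      (fun x hx => (hode x (hsub hx)).hasDerivWithinAt)
      (fun x hx => by
        simpa [Real.norm_eq_abs] using hderiv_bound x (hsub hx) (hbound x hx))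
      h0mem ht
    simpa [Real.norm_eq_abs, abs_of_nonneg ht.1] using this
  -- bootstrap: |ψ| ≤ M on all of [0, ε]
  have hglobal : ∀ t ∈ Set.Icc (0:ℝ) ε, |ψ t| ≤ M := by
    set A : Set ℝ := {s | s ∈ Set.Icc (0:ℝ) ε ∧ ∀ t ∈ Set.Icc (0:ℝ) s, |ψ t| ≤ M}
      with hA_def
    have h0A : (0:ℝ) ∈ A := by
      refine ⟨⟨le_rfl, hε_pos.le⟩, fun t ht => ?_⟩
      have : t = 0 := le_antisymm ht.2 ht.1
      rw [this]; exact hψ0.trans hBM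
    have hA_ne : A.Nonempty := ⟨0, h0A⟩
    have hbdd : BddAbove A := ⟨ε, fun x hx => hx.1.2⟩
    set T := sSup A with hT_def
    have hT0 : 0 ≤ T := le_csSup hbdd h0A
    have hTε : T ≤ ε := csSup_le hA_ne fun x hx => hx.1.2
    have hTIcc : T ∈ Set.Icc (0:ℝ) ε := ⟨hT0, hTε⟩
    have hψTle : |ψ T| ≤ M := by
      rcases eq_or_lt_of_le hT0 with h0T | h0T
      · rw [← h0T]; exact hψ0.trans hBM
      · have hclos : T ∈ closure (Set.Ico (0:ℝ) T) := by
          rw [closure_Ico (ne_of_lt h0T)]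
          exact ⟨hT0, le_rfl⟩
        have hne : (nhdsWithin T (Set.Ico (0:ℝ) T)).NeBot :=
          mem_closure_iff_nhdsWithin_neBot.mp hclos
        have hcw : ContinuousWithinAt ψ (Set.Ico (0:ℝ) T) T :=
          (hψ_cont T hTIcc).mono (fun x hx => ⟨hx.1, hx.2.le.trans hTε⟩)
        have htend : Filter.Tendsto (fun x => |ψ x|) (nhdsWithin T (Set.Ico (0:ℝ) T))
            (nhds |ψ T|) := hcw.abs
        refine le_of_tendsto htend ?_
        filter_upwards [self_mem_nhdsWithin] with x hx
        obtain ⟨s, hsA, hxs⟩ := exists_lt_of_lt_csSup hA_ne hx.2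
        exact hsA.2 x ⟨hx.1, hxs.le⟩
    -- |ψ| ≤ M on [0, T]
    have hTA : ∀ t ∈ Set.Icc (0:ℝ) T, |ψ t| ≤ M := by
      intro t ht
      rcases lt_or_eq_of_le ht.2 with hlt | heq
      · obtain ⟨s, hsA, hts⟩ := exists_lt_of_lt_csSup hA_ne hlt
        exact hsA.2 t ⟨ht.1, hts.le⟩
      · rw [heq]; exact hψTle
    -- show T = ε
    have hTeq : T = ε := by
      by_contra hneq
      have hTlt : T < ε := lt_of_le_of_ne hTε hneq
      have hψT : |ψ T| < M := by
        have h1 : |ψ T - ψ 0| ≤ D * T := key T hTIcc hTA T ⟨hT0, le_rfl⟩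
        have h2 : |ψ T| ≤ |ψ 0| + |ψ T - ψ 0| := by
          simpa using abs_add_le (ψ 0) (ψ T - ψ 0)
        have h3 : D * T < D * ε := mul_lt_mul_of_pos_left hTlt hD0
        have h4 : M = B / (-u) + B / (-u) := by rw [hM_def]; ring
        linarith
      have hcw : ContinuousWithinAt ψ (Set.Icc 0 ε) T := hψ_cont T hTIcc
      rw [Metric.continuousWithinAt_iff] at hcw
      obtain ⟨δ, hδ0, hδ⟩ := hcw (M - |ψ T|) (by linarith)
      set s' := min ε (T + δ / 2) with hs'_def
      have hs'T : T < s' := lt_min hTlt (by linarith)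
      have hs'ε : s' ≤ ε := min_le_left _ _
      have hs'A : s' ∈ A := by
        refine ⟨⟨by linarith, hs'ε⟩, fun t ht => ?_⟩
        rcases le_or_gt t T with hle | hgt
        · exact hTA t ⟨ht.1, hle⟩
        · have htε : t ∈ Set.Icc (0:ℝ) ε := ⟨ht.1, ht.2.trans hs'ε⟩
          have hdist : dist t T < δ := by
            rw [Real.dist_eq, abs_of_pos (by linarith : (0:ℝ) < t - T)]
            have : t ≤ T + δ / 2 := ht.2.trans (min_le_right _ _)
            linarith
          have hd := hδ htε hdist
          rw [Real.dist_eq] at hd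
          have habs : |ψ t| ≤ |ψ T| + |ψ t - ψ T| := by
            simpa using abs_add_le (ψ T) (ψ t - ψ T)
          linarith
      exact absurd (le_csSup hbdd hs'A) (not_le.mpr hs'T)
    intro t ht
    exact hTA t (hTeq ▸ ht)
  -- conclusion
  have main : ∀ s ∈ Set.Icc (0:ℝ) ε, |ψ s - ψ 0| ≤ 7 * B ^ 2 * a * ε / u ^ 2 := by
    intro s hs
    have h1 : |ψ s - ψ 0| ≤ D * s :=
      key ε ⟨hε_pos.le, le_rfl⟩ hglobal s hs
    have h2 : D * s ≤ D * ε := mul_le_mul_of_nonneg_left hs.2 hD0.le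
    have h3 : D * ε = 7 * B ^ 2 * a * ε / u ^ 2 := by rw [hD_def]; ring
    linarith
  refine ⟨main, fun h0 s hs => ?_⟩
  have := abs_le.mp (main s hs)
  linarith [this.1]
end
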